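/- For n ≥ 2, the number of SIF permutations σ of [n] such that deleting n from its cycle yields a SIF permutation of [n-1] equals (n-1)·a_{n-1}, where a_{n-1} is the number of SIF permutations of [n-1]; the map (σ_{n-1}, i) ↦ (insert n after i in σ_{n-1}) is a bijection from pairs of a SIF permutation of [n-1] and an element i ∈ [n-1] onto this set. -/

import Mathlib

def Stab {n : ℕ} (σ : Equiv.Perm (Fin n)) (S : Finset (Fin n)) : Prop :=
  S.image σ = S

def SIF {n : ℕ} (σ : Equiv.Perm (Fin n)) : Prop :=
  ∀ a b : Fin n, (Finset.Icc a b).Nonempty → Finset.Icc a b ≠ Finset.univ →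
    ¬ Stab σ (Finset.Icc a b)

/-- `σ'` is obtained from `σ` by inserting the largest element `n` into the cycle of `σ`
after `i` : `σ'(i) = n`, `σ'(n) = σ(i)`, `σ'(j) = σ(j)` otherwise. -/
def InsertTop {n : ℕ} (σ : Equiv.Perm (Fin n)) (i : Fin n)
    (σ' : Equiv.Perm (Fin (n + 1))) : Prop :=
  σ' (Fin.castSucc i) = Fin.last n ∧ σ' (Fin.last n) = Fin.castSucc (σ i) ∧
    ∀ j : Fin n, j ≠ i → σ' (Fin.castSucc j) = Fin.castSucc (σ j)

/-- `τ` is obtained from `σ'` by deleting the largest element `n` from its cycle. -/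
def DeleteTop {n : ℕ} (σ' : Equiv.Perm (Fin (n + 1))) (τ : Equiv.Perm (Fin n)) : Prop :=
  ∀ j : Fin n, (τ j : ℕ) =
    if σ' (Fin.castSucc j) = Fin.last n then (σ' (Fin.last n) : ℕ)
    else (σ' (Fin.castSucc j) : ℕ)

/-!
Inserting the top element after `i` and then deleting it gives back `σ`, and `i` is recovered as
the preimage of the top element, so insertion is injective; conversely every permutation not
fixing the top element is obtained by inserting it into its deletion, and a SIF permutation of
a set with at least two elements fixes no point. Insertion preserves SIF: if the new permutation
stabilised a proper interval `I`, then `I` minus the top element would be a proper nonempty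
interval stabilised by `σ`, because the only arrow through the top element, `i ↦ top ↦ σ i`,
is short-cut to `i ↦ σ i` by `σ`.
-/

open Fin Equiv

theorem Finset.eq_Icc_min'_max'_of_ordConnected {α : Type*} [LinearOrder α]
    [LocallyFiniteOrder α] {S : Finset α} (hne : S.Nonempty) (hc : (S : Set α).OrdConnected) :
    S = Finset.Icc (S.min' hne) (S.max' hne) := by
  ext x
  refine ⟨fun hx => Finset.mem_Icc.2 ⟨S.min'_le x hx, S.le_max' x hx⟩, fun hx => ?_⟩
  have := hc.out (S.min'_mem hne) (S.max'_mem hne)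
  exact_mod_cast this (by simpa using hx)

section

variable {n : ℕ}

theorem stab_iff_forall_mem (σ : Perm (Fin n)) (S : Finset (Fin n)) :
    Stab σ S ↔ ∀ x ∈ S, σ x ∈ S := by
  refine ⟨fun h x hx => h ▸ Finset.mem_image_of_mem σ hx, fun h => ?_⟩
  refine Finset.eq_of_subset_of_card_le (Finset.image_subset_iff.2 h) ?_
  rw [Finset.card_image_of_injective _ σ.injective]

theorem SIF.not_stab {σ : Perm (Fin n)} (hσ : SIF σ) {S : Finset (Fin n)} (hne : S.Nonempty)
    (hS : S ≠ Finset.univ) (hc : (S : Set (Fin n)).OrdConnected) : ¬ Stab σ S := by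
  rw [Finset.eq_Icc_min'_max'_of_ordConnected hne hc] at hS ⊢
  exact hσ _ _ (Finset.nonempty_Icc.2 (S.min'_le_max' hne)) hS

theorem SIF.apply_last_ne (hn : 1 ≤ n) {σ' : Perm (Fin (n + 1))} (h : SIF σ') :
    σ' (last n) ≠ last n := by
  intro hfix
  have : Nontrivial (Fin (n + 1)) := Fin.nontrivial_iff_two_le.2 (by omega)
  refine h (last n) (last n) (by simp) (by simp) ?_
  simp [Stab, hfix]

def extPerm (σ : Perm (Fin n)) : Perm (Fin (n + 1)) :=
  finSuccEquivLast.symm.permCongr σ.optionCongr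

@[simp]
theorem extPerm_castSucc (σ : Perm (Fin n)) (j : Fin n) :
    extPerm σ (castSucc j) = castSucc (σ j) := by
  simp [extPerm, permCongr_apply]

@[simp]
theorem extPerm_last (σ : Perm (Fin n)) : extPerm σ (last n) = last n := by
  simp [extPerm, permCongr_apply]

def insertTop (σ : Perm (Fin n)) (i : Fin n) : Perm (Fin (n + 1)) :=
  swap (castSucc (σ i)) (last n) * extPerm σ

theorem insertTop_spec (σ : Perm (Fin n)) (i : Fin n) : InsertTop σ i (insertTop σ i) := by
  refine ⟨by simp [insertTop], by simp [insertTop], fun j hj => ?_⟩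
  simp only [insertTop, Perm.mul_apply, extPerm_castSucc]
  exact swap_apply_of_ne_of_ne (by simpa using σ.injective.ne hj) (castSucc_lt_last _).ne

theorem InsertTop.eq_insertTop {σ : Perm (Fin n)} {i : Fin n} {σ' : Perm (Fin (n + 1))}
    (h : InsertTop σ i σ') : σ' = insertTop σ i := by
  obtain ⟨h₁, h₂, h₃⟩ := h
  obtain ⟨g₁, g₂, g₃⟩ := insertTop_spec σ i
  ext x
  induction x using Fin.lastCases with
  | last => rw [h₂, g₂]
  | cast j =>
    by_cases hj : j = i
    · rw [hj, h₁, g₁]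
    · rw [h₃ j hj, g₃ j hj]

theorem existsUnique_insertTop (σ : Perm (Fin n)) (i : Fin n) :
    ∃! σ' : Perm (Fin (n + 1)), InsertTop σ i σ' :=
  ⟨insertTop σ i, insertTop_spec σ i, fun _ h => h.eq_insertTop⟩

theorem DeleteTop.unique {σ' : Perm (Fin (n + 1))} {τ₁ τ₂ : Perm (Fin n)}
    (h₁ : DeleteTop σ' τ₁) (h₂ : DeleteTop σ' τ₂) : τ₁ = τ₂ :=
  Equiv.ext fun j => Fin.ext ((h₁ j).trans (h₂ j).symm)

theorem InsertTop.deleteTop {σ : Perm (Fin n)} {i : Fin n} {σ' : Perm (Fin (n + 1))}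
    (h : InsertTop σ i σ') : DeleteTop σ' σ := by
  obtain ⟨h₁, h₂, h₃⟩ := h
  intro j
  by_cases hj : j = i
  · rw [hj, if_pos h₁, h₂, val_castSucc]
  · rw [h₃ j hj, if_neg (castSucc_lt_last _).ne, val_castSucc]

theorem InsertTop.inj {σ₁ σ₂ : Perm (Fin n)} {i₁ i₂ : Fin n} {σ' : Perm (Fin (n + 1))}
    (h₁ : InsertTop σ₁ i₁ σ') (h₂ : InsertTop σ₂ i₂ σ') :
    σ₁ = σ₂ ∧ i₁ = i₂ :=
  ⟨h₁.deleteTop.unique h₂.deleteTop,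
    castSucc_injective n (σ'.injective (h₁.1.trans h₂.1.symm))⟩

-- Identifying `Fin (n + 1)` with `Option (Fin n)`, `last n` becoming `none`, deleting the top
-- element from its cycle is `Equiv.removeNone`.
theorem exists_deleteTop (σ' : Perm (Fin (n + 1))) : ∃ τ : Perm (Fin n), DeleteTop σ' τ := by
  set ρ := finSuccEquivLast.permCongr σ'
  have hρ : ∀ j, ρ (some j) = finSuccEquivLast (σ' (castSucc j)) := by
    simp [ρ, permCongr_apply]
  have hval : ∀ (x : Fin (n + 1)) (y : Fin n), some y = finSuccEquivLast x → (y : ℕ) = x := by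
    intro x y h
    rw [← val_castSucc, ← finSuccEquivLast_symm_some, h, symm_apply_apply]
  refine ⟨removeNone ρ, fun j => ?_⟩
  split_ifs with h
  · exact hval _ _ (removeNone_none ρ (by rw [hρ, h, finSuccEquivLast_last]))
  · refine hval _ _ ((removeNone_some ρ (Option.ne_none_iff_exists'.1 ?_)).trans (hρ j))
    rwa [hρ, Ne, ← finSuccEquivLast_last, EmbeddingLike.apply_eq_iff_eq]

theorem DeleteTop.insertTop {σ' : Perm (Fin (n + 1))} {τ : Perm (Fin n)} (hτ : DeleteTop σ' τ)
    {i : Fin n} (hi : σ' (castSucc i) = last n) : InsertTop τ i σ' := by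
  refine ⟨hi, Fin.ext ?_, fun j hj => Fin.ext ?_⟩
  · rw [val_castSucc, hτ i, if_pos hi]
  · have hne : σ' (castSucc j) ≠ last n := fun he =>
      hj (castSucc_injective n (σ'.injective (he.trans hi.symm)))
    rw [val_castSucc, hτ j, if_neg hne]

theorem exists_insertTop_of_apply_last_ne {σ' : Perm (Fin (n + 1))}
    (h : σ' (last n) ≠ last n) : ∃ (σ : Perm (Fin n)) (i : Fin n), InsertTop σ i σ' := by
  have hi : σ'.symm (last n) ≠ last n := fun he =>
    h (by simpa [he] using σ'.apply_symm_apply (last n))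
  obtain ⟨τ, hτ⟩ := exists_deleteTop σ'
  exact ⟨τ, (σ'.symm (last n)).castPred hi, hτ.insertTop (by simp)⟩

theorem InsertTop.stab_preimage_castSucc {σ : Perm (Fin n)} {i : Fin n}
    {σ' : Perm (Fin (n + 1))} (h : InsertTop σ i σ') {S : Finset (Fin (n + 1))}
    (hS : Stab σ' S) : Stab σ (S.preimage castSucc (castSucc_injective n).injOn) := by
  rw [stab_iff_forall_mem] at hS ⊢
  intro j hj
  rw [Finset.mem_preimage] at hj ⊢
  by_cases hji : j = i
  · rw [hji, ← h.2.1]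
    exact hS _ (h.1 ▸ hS _ (hji ▸ hj))
  · rw [← h.2.2 j hji]
    exact hS _ hj

theorem InsertTop.sif {σ : Perm (Fin n)} (hσ : SIF σ) {i : Fin n} {σ' : Perm (Fin (n + 1))}
    (h : InsertTop σ i σ') : SIF σ' := by
  intro a b hne hproper hstab
  have hmaps := (stab_iff_forall_mem σ' _).1 hstab
  refine hσ.not_stab ?_ ?_ ?_ (h.stab_preimage_castSucc hstab)
  · obtain ⟨x, hx⟩ := hne
    rcases eq_castSucc_or_eq_last x with ⟨j, rfl⟩ | rfl
    · exact ⟨j, by simpa using hx⟩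
    · exact ⟨σ i, by simpa [← h.2.1] using hmaps _ hx⟩
  · intro hJ
    have hi : castSucc i ∈ Finset.Icc a b :=
      Finset.mem_preimage.1 (Finset.eq_univ_iff_forall.1 hJ i)
    have hlast : last n ∈ Finset.Icc a b := h.1 ▸ hmaps _ hi
    refine hproper (Finset.eq_univ_of_forall fun x => ?_)
    rcases eq_castSucc_or_eq_last x with ⟨j, rfl⟩ | rfl
    · exact Finset.mem_preimage.1 (Finset.eq_univ_iff_forall.1 hJ j)
    · exact hlast
  · rw [Finset.coe_preimage, Finset.coe_Icc]
    exact Set.ordConnected_Icc.preimage_mono strictMono_castSucc.monotone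

def SIFDeletable (σ' : Perm (Fin (n + 1))) : Prop :=
  SIF σ' ∧ ∀ τ : Perm (Fin n), DeleteTop σ' τ → SIF τ

theorem InsertTop.sifDeletable {σ : Perm (Fin n)} (hσ : SIF σ) {i : Fin n}
    {σ' : Perm (Fin (n + 1))} (h : InsertTop σ i σ') : SIFDeletable σ' :=
  ⟨h.sif hσ, fun _ hτ => hτ.unique h.deleteTop ▸ hσ⟩

theorem SIFDeletable.existsUnique_insertTop (hn : 1 ≤ n) {σ' : Perm (Fin (n + 1))}
    (h : SIFDeletable σ') :
    ∃! p : {q : Perm (Fin n) × Fin n // SIF q.1}, InsertTop p.1.1 p.1.2 σ' := by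
  obtain ⟨σ, i, hins⟩ := exists_insertTop_of_apply_last_ne (h.1.apply_last_ne hn)
  refine ⟨⟨(σ, i), h.2 σ hins.deleteTop⟩, hins, fun p hp => ?_⟩
  obtain ⟨hσ, hi⟩ := hp.inj hins
  exact Subtype.ext (Prod.ext hσ hi)

theorem card_sifDeletable (hn : 1 ≤ n) :
    Nat.card {σ' : Perm (Fin (n + 1)) // SIFDeletable σ'} =
      n * Nat.card {σ : Perm (Fin n) // SIF σ} := by
  let f :
      {q : Perm (Fin n) × Fin n // SIF q.1} → {σ' : Perm (Fin (n + 1)) // SIFDeletable σ'} :=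
    fun q => ⟨insertTop q.1.1 q.1.2, (insertTop_spec _ _).sifDeletable q.2⟩
  have hf : Function.Bijective f := by
    refine ⟨fun q₁ q₂ he => ?_, fun σ' => ?_⟩
    · have he' : insertTop q₁.1.1 q₁.1.2 = insertTop q₂.1.1 q₂.1.2 :=
        congrArg Subtype.val he
      obtain ⟨hσ, hi⟩ := (insertTop_spec q₁.1.1 q₁.1.2).inj (he' ▸ insertTop_spec q₂.1.1 q₂.1.2)
      exact Subtype.ext (Prod.ext hσ hi)
    · obtain ⟨p, hp, -⟩ := σ'.2.existsUnique_insertTop hn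
      exact ⟨p, Subtype.ext hp.eq_insertTop.symm⟩
  rw [← Nat.card_congr (Equiv.ofBijective f hf), Nat.card_congr prodSubtypeFstEquivSubtypeProd,
    Nat.card_prod, Nat.card_fin, mul_comm]

end

/-- The SIF permutations `σ'` of `[n]` (modeled as `Fin (n+1)`, ambient size `n+1 ≥ 2`) such
that deleting the largest element from its cycle yields a SIF permutation of `[n-1]` number
exactly `(n-1)·a_{n-1}` (here `n · a_n` in the shifted indexing), and the insertion map
`(σ, i) ↦ (insert the largest element after i in σ)` is a bijection from pairs of a SIF
permutation of `[n-1]` and an element `i ∈ [n-1]` onto this set. -/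
theorem stmt19 (n : ℕ) (hn : 1 ≤ n) :
    Nat.card {σ' : Equiv.Perm (Fin (n + 1)) //
        SIF σ' ∧ ∀ τ : Equiv.Perm (Fin n), DeleteTop σ' τ → SIF τ} =
      n * Nat.card {σ : Equiv.Perm (Fin n) // SIF σ} ∧
    (∀ (σ : Equiv.Perm (Fin n)), SIF σ → ∀ i : Fin n,
      ∃! σ' : Equiv.Perm (Fin (n + 1)), InsertTop σ i σ') ∧
    (∀ (σ : Equiv.Perm (Fin n)), SIF σ → ∀ i : Fin n,
      ∀ σ' : Equiv.Perm (Fin (n + 1)), InsertTop σ i σ' →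
        SIF σ' ∧ ∀ τ : Equiv.Perm (Fin n), DeleteTop σ' τ → SIF τ) ∧
    (∀ σ' : Equiv.Perm (Fin (n + 1)),
      (SIF σ' ∧ ∀ τ : Equiv.Perm (Fin n), DeleteTop σ' τ → SIF τ) →
        ∃! p : {q : Equiv.Perm (Fin n) × Fin n // SIF q.1}, InsertTop p.1.1 p.1.2 σ') :=
  ⟨card_sifDeletable hn, fun σ _ i => existsUnique_insertTop σ i,
    fun _ hσ _ _ h => h.sifDeletable hσ, fun _ h => SIFDeletable.existsUnique_insertTop hn h⟩
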